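/- arXiv:math/0010169 — 6 statements merged into one kernel-verified Lean document; each statement's English description precedes it below -/
import Mathlib

section
/- Let p be a prime and r₁ < r₂ < ... < r_m positive integers. Suppose ε₀ = 1, ε₁, ..., ε_{n-1} are distinct complex numbers such that for all i ≠ j, εᵢ/εⱼ is a primitive p^{r_t}-th root of unity for some t ∈ {1,...,m}. Then n ≤ p^m. -/
lemma aux4 (p : ℕ) (hp : p.Prime) : ∀ (m : ℕ) (r : Fin m → ℕ), (∀ t, 1 ≤ r t) →
    StrictMono r →
    ∀ (S : Finset ℂ), (∀ x ∈ S, ∀ y ∈ S, x ≠ y → ∃ t, IsPrimitiveRoot (x / y) (p ^ r t)) →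
    S.card ≤ p ^ m := by
  intro m
  induction m with
  | zero =>
    intro r hr hmono S hS
    simp only [pow_zero]
    refine Finset.card_le_one.mpr fun a ha b hb => ?_
    by_contra hab
    obtain ⟨t, _⟩ := hS a ha b hb hab
    exact t.elim0
  | succ k ih =>
    intro r hr hmono S hS
    rcases le_or_gt S.card 1 with h1 | h1
    · exact h1.trans (Nat.one_le_pow _ _ hp.pos)
    -- all elements nonzero
    have hne : ∀ x ∈ S, x ≠ 0 := by
      intro x hx hx0
      obtain ⟨y, hy, hxy⟩ := Finset.exists_mem_ne h1 x
      obtain ⟨t, ht⟩ := hS y hy x hx hxy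
      have : (y / x) ^ (p ^ r t) = 1 := ht.pow_eq_one
      rw [hx0, div_zero, zero_pow (pow_pos hp.pos _).ne'] at this
      exact one_ne_zero this.symm
    obtain ⟨x0, hx0⟩ : S.Nonempty := Finset.card_pos.mp (by omega)
    set R := r (Fin.last k) with hR
    have hR1 : 1 ≤ R := hr _
    set K := p ^ (R - 1) with hK
    set f : ℂ → ℂ := fun x => (x / x0) ^ K with hf
    -- each element's ratio to x0 is a p^R-th root of unity
    have hpow : ∀ x ∈ S, (x / x0) ^ (p ^ R) = 1 := by
      intro x hx
      rcases eq_or_ne x x0 with rfl | hxx0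
      · rw [div_self (hne x hx), one_pow]
      obtain ⟨t, ht⟩ := hS x hx x0 hx0 hxx0
      have hdvd : p ^ r t ∣ p ^ R :=
        (Nat.pow_dvd_pow_iff_le_right hp.one_lt).mpr (hmono.monotone (Fin.le_last t))
      exact ht.pow_eq_one_iff_dvd _ |>.mpr hdvd
    -- image of f lies in p-th roots of unity
    have himg : S.image f ⊆ (Polynomial.nthRoots p (1 : ℂ)).toFinset := by
      intro z hz
      obtain ⟨x, hx, rfl⟩ := Finset.mem_image.mp hz
      rw [Multiset.mem_toFinset, Polynomial.mem_nthRoots hp.pos]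
      rw [hf]
      rw [← pow_mul]
      have : K * p = p ^ R := by
        rw [hK, ← pow_succ]
        congr 1
        omega
      rw [this]
      exact hpow x hx
    have himgcard : (S.image f).card ≤ p := by
      calc (S.image f).card ≤ (Polynomial.nthRoots p (1 : ℂ)).toFinset.card :=
            Finset.card_le_card himg
        _ ≤ Multiset.card (Polynomial.nthRoots p (1 : ℂ)) := Multiset.toFinset_card_le _
        _ ≤ p := Polynomial.card_nthRoots p 1
    -- each fiber has card ≤ p^k
    have hfiber : ∀ z, (S.filter fun x => f x = z).card ≤ p ^ k := by
      intro z
      apply ih (r ∘ Fin.castSucc) (fun t => hr _)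
        (fun a b hab => hmono (Fin.castSucc_lt_castSucc_iff.mpr hab))
      intro x hx y hy hxy
      rw [Finset.mem_filter] at hx hy
      obtain ⟨t, ht⟩ := hS x hx.1 y hy.1 hxy
      -- f x = f y implies (x/y)^K = 1
      have hxne := hne x hx.1
      have hyne := hne y hy.1
      have hx0ne := hne x0 hx0
      have hKeq : (x / y) ^ K = 1 := by
        have h1 : (x / x0) ^ K = (y / x0) ^ K := hx.2.trans hy.2.symm
        rw [div_pow, div_pow, div_eq_div_iff (pow_ne_zero _ hx0ne) (pow_ne_zero _ hx0ne)] at h1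
        rw [div_pow, div_eq_one_iff_eq (pow_ne_zero _ hyne)]
        exact mul_right_cancel₀ (pow_ne_zero _ hx0ne) h1
      have hdvd : p ^ r t ∣ K := (ht.pow_eq_one_iff_dvd _).mp hKeq
      have hle : r t ≤ R - 1 := (Nat.pow_dvd_pow_iff_le_right hp.one_lt).mp hdvd
      have htlt : t < Fin.last k := by
        by_contra hcon
        have : t = Fin.last k := le_antisymm (Fin.le_last t) (not_lt.mp hcon)
        rw [this] at hle
        omega
      refine ⟨⟨t.1, ?_⟩, ?_⟩
      · exact htlt
      · simpa using ht
    calc S.card = ∑ z ∈ S.image f, (S.filter fun x => f x = z).card :=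
          Finset.card_eq_sum_card_image f S
      _ ≤ (S.image f).card * p ^ k :=
          Finset.sum_le_card_nsmul _ _ _ (fun z _ => hfiber z)
      _ ≤ p * p ^ k := Nat.mul_le_mul_right _ himgcard
      _ = p ^ (k + 1) := by rw [pow_succ, mul_comm]

theorem stmt4 (p : ℕ) (hp : p.Prime) (m : ℕ) (r : Fin m → ℕ)
    (hr : ∀ t, 1 ≤ r t) (hmono : StrictMono r)
    (n : ℕ) (hn : 0 < n) (ε : Fin n → ℂ)
    (h0 : ε ⟨0, hn⟩ = 1)
    (hinj : Function.Injective ε)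
    (hprim : ∀ i j, i ≠ j → ∃ t : Fin m, IsPrimitiveRoot (ε i / ε j) (p ^ r t)) :
    n ≤ p ^ m := by
  have : (Finset.univ.image ε).card ≤ p ^ m := by
    apply aux4 p hp m r hr hmono
    intro x hx y hy hxy
    obtain ⟨i, _, rfl⟩ := Finset.mem_image.mp hx
    obtain ⟨j, _, rfl⟩ := Finset.mem_image.mp hy
    exact hprim i j (fun h => hxy (by rw [h]))
  rwa [Finset.card_image_of_injective _ hinj, Finset.card_univ, Fintype.card_fin] at this
end

section
/- Let A ⊂ ℤ≥0 be a finite set with 0 ∈ A, N = #A, and A(x) = Σ_{a∈A} x^a. Suppose there exist distinct θ₁, ..., θ_{N-1} ∈ (0,1) ∩ p^{-α}ℤ (p prime, α ∈ ℕ), such that with θ₀ = 0, A(e^{2πi(θᵢ-θⱼ)}) = 0 for all i ≠ j. Then N is a power of p. -/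
open Complex

theorem stmt5 (A : Finset ℕ) (h0A : 0 ∈ A) (N : ℕ) (hN : N = A.card)
    (p : ℕ) (hp : p.Prime) (α : ℕ)
    (θ : Fin N → ℝ) (hθ0 : ∀ h : 0 < N, θ ⟨0, h⟩ = 0)
    (hinj : Function.Injective θ)
    (hIoo : ∀ j h, j ≠ ⟨0, h⟩ → θ j ∈ Set.Ioo (0 : ℝ) 1)
    (hrat : ∀ j, ∃ k : ℤ, θ j = (k : ℝ) / (p ^ α : ℕ))
    (hspec : ∀ i j, i ≠ j →
      ∑ a ∈ A, Complex.exp (2 * Real.pi * Complex.I * (θ i - θ j)) ^ a = 0) :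
    ∃ β : ℕ, N = p ^ β := by
  classical
  haveI : Fact p.Prime := ⟨hp⟩
  have hNpos : 0 < N := by rw [hN]; exact Finset.card_pos.mpr ⟨0, h0A⟩
  have hpαpos : (0:ℕ) < p ^ α := pow_pos hp.pos α
  have hpαR : (0:ℝ) < ((p ^ α : ℕ) : ℝ) := by exact_mod_cast hpαpos
  -- integer representatives
  choose m hm using hrat
  have hθmem : ∀ j, 0 ≤ θ j ∧ θ j < 1 := by
    intro j
    by_cases hj : j = ⟨0, hNpos⟩
    · subst hj; rw [hθ0 hNpos]; exact ⟨le_refl 0, one_pos⟩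
    · exact ⟨(hIoo j hNpos hj).1.le, (hIoo j hNpos hj).2⟩
  have hmcast : ∀ j, (m j : ℝ) = θ j * ((p ^ α : ℕ) : ℝ) := by
    intro j; rw [hm j]; field_simp
  have hm0 : ∀ j, 0 ≤ m j := by
    intro j
    have : (0:ℝ) ≤ (m j : ℝ) := by
      rw [hmcast j]; exact mul_nonneg (hθmem j).1 hpαR.le
    exact_mod_cast this
  have hmlt : ∀ j, m j < (p ^ α : ℤ) := by
    intro j
    have : (m j : ℝ) < ((p ^ α : ℕ) : ℝ) := by
      rw [hmcast j]
      calc θ j * ((p ^ α : ℕ) : ℝ) < 1 * ((p ^ α : ℕ) : ℝ) := by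
            exact mul_lt_mul_of_pos_right (hθmem j).2 hpαR
        _ = ((p ^ α : ℕ) : ℝ) := one_mul _
    exact_mod_cast this
  set k : Fin N → ℕ := fun j => (m j).toNat with hkdef
  have hkm : ∀ j, (k j : ℤ) = m j := fun j => Int.toNat_of_nonneg (hm0 j)
  have hkval : ∀ j, θ j = (k j : ℝ) / ((p ^ α : ℕ) : ℝ) := by
    intro j
    rw [hm j]
    congr 1
    exact_mod_cast (hkm j).symm
  have hklt : ∀ j, k j < p ^ α := by
    intro j
    have : (k j : ℤ) < (p ^ α : ℤ) := by rw [hkm j]; exact hmlt j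
    exact_mod_cast this
  have hkinj : Function.Injective k := by
    intro i j hij
    apply hinj
    rw [hkval i, hkval j, hij]
  -- the set of valuations of differences
  set V : Finset ℕ := Finset.image
      (fun q : Fin N × Fin N => padicValNat p (k q.1 - k q.2))
      (Finset.univ.filter fun q : Fin N × Fin N => k q.2 < k q.1) with hVdef
  have hVmem : ∀ v : ℕ, v ∈ V ↔
      ∃ i j : Fin N, k j < k i ∧ padicValNat p (k i - k j) = v := by
    intro v
    simp only [hVdef, Finset.mem_image, Finset.mem_filter, Finset.mem_univ, true_and,
      Prod.exists]
  have hval_lt : ∀ d : ℕ, 0 < d → d < p ^ α → padicValNat p d < α := by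
    intro d hd0 hdα
    have h1 : p ^ padicValNat p d ∣ d := pow_padicValNat_dvd
    have h2 : p ^ padicValNat p d < p ^ α := lt_of_le_of_lt (Nat.le_of_dvd hd0 h1) hdα
    exact (Nat.pow_lt_pow_iff_right hp.one_lt).mp h2
  have hVlt : ∀ v ∈ V, v < α := by
    intro v hv
    obtain ⟨i, j, hlt, hv'⟩ := (hVmem v).mp hv
    have hd0 : 0 < k i - k j := by omega
    have hdα : k i - k j < p ^ α := lt_of_le_of_lt (Nat.sub_le _ _) (hklt i)
    rw [← hv']; exact hval_lt _ hd0 hdα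
  -- p does not divide ord_compl
  have hord : ∀ d : ℕ, 0 < d →
      p ^ padicValNat p d * (d / p ^ padicValNat p d) = d ∧
      ¬ p ∣ d / p ^ padicValNat p d := by
    intro d hd0
    have h1 : p ^ padicValNat p d ∣ d := pow_padicValNat_dvd
    refine ⟨Nat.mul_div_cancel' h1, ?_⟩
    intro hdvd
    obtain ⟨w, hw⟩ := hdvd
    have h2 : p ^ (padicValNat p d + 1) ∣ d := by
      refine ⟨w, ?_⟩
      rw [pow_succ, mul_assoc, ← hw, Nat.mul_div_cancel' h1]
    have h3 := (Nat.Prime.pow_dvd_iff_le_factorization hp hd0.ne').mp h2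
    rw [Nat.factorization_def d hp] at h3
    omega
  -- upper bound : N ≤ p ^ V.card
  have hub : N ≤ p ^ V.card := by
    set F : Fin N → ({x // x ∈ V} → Fin p) :=
      fun j v => ⟨k j / p ^ (v : ℕ) % p, Nat.mod_lt _ hp.pos⟩ with hFdef
    have main : ∀ i j : Fin N, k j < k i → F i = F j → False := by
      intro i j hlt hFeq
      set d : ℕ := k i - k j with hd
      have hd0 : 0 < d := by omega
      obtain ⟨hdu, hpu⟩ := hord d hd0
      set v : ℕ := padicValNat p d with hv
      have hvV : v ∈ V := (hVmem v).mpr ⟨i, j, hlt, rfl⟩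
      have heq : k i / p ^ v % p = k j / p ^ v % p := by
        have := congrFun hFeq ⟨v, hvV⟩
        simpa [hFdef] using congrArg Fin.val this
      set u : ℕ := d / p ^ v with hu
      have hki : k i = k j + p ^ v * u := by omega
      have hdiv : k i / p ^ v = k j / p ^ v + u := by
        rw [hki, Nat.add_mul_div_left _ _ (pow_pos hp.pos v)]
      apply hpu
      have hmod : (k j / p ^ v + u) % p = (k j / p ^ v) % p := by
        rw [← hdiv]; exact heq
      have : k j / p ^ v ≡ k j / p ^ v + u [MOD p] := hmod.symm
      simpa using (Nat.modEq_iff_dvd' (Nat.le_add_right _ _)).mp this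
    have hFinj : Function.Injective F := by
      intro i j hFeq
      rcases Nat.lt_trichotomy (k i) (k j) with h | h | h
      · exact absurd (main j i h hFeq.symm) (fun x => x)
      · exact hkinj h
      · exact absurd (main i j h hFeq) (fun x => x)
    calc N = Fintype.card (Fin N) := (Fintype.card_fin N).symm
      _ ≤ Fintype.card ({x // x ∈ V} → Fin p) := Fintype.card_le_of_injective F hFinj
      _ = p ^ V.card := by rw [Fintype.card_fun, Fintype.card_fin, Fintype.card_coe]
  -- lower bound : p ^ V.card ∣ N
  set P : Polynomial ℤ := ∑ a ∈ A, Polynomial.X ^ a with hPdef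
  have hP1 : P.eval 1 = (N : ℤ) := by
    simp [hPdef, Polynomial.eval_finset_sum, hN]
  have hdvd : ∀ v ∈ V, Polynomial.cyclotomic (p ^ (α - v)) ℤ ∣ P := by
    intro v hv
    obtain ⟨i, j, hlt, hveq⟩ := (hVmem v).mp hv
    set d : ℕ := k i - k j with hd
    have hd0 : 0 < d := by omega
    have hdα : d < p ^ α := lt_of_le_of_lt (Nat.sub_le _ _) (hklt i)
    have hvα : v < α := hVlt v hv
    obtain ⟨hdu, hpu⟩ := hord d hd0
    rw [hveq] at hdu hpu
    set u : ℕ := d / p ^ v with hu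
    set ζ : ℂ := Complex.exp (2 * Real.pi * Complex.I / ((p ^ α : ℕ) : ℂ)) with hζdef
    have hζ : IsPrimitiveRoot ζ (p ^ α) :=
      Complex.isPrimitiveRoot_exp (p ^ α) hpαpos.ne'
    have hζ2 : IsPrimitiveRoot (ζ ^ (p ^ v)) (p ^ (α - v)) := by
      refine hζ.pow hpαpos ?_
      rw [← pow_add]
      congr 1
      omega
    have hcop : Nat.Coprime u (p ^ (α - v)) :=
      Nat.Coprime.pow_right _ ((hp.coprime_iff_not_dvd.mpr hpu).symm)
    have hζ3 : IsPrimitiveRoot ((ζ ^ (p ^ v)) ^ u) (p ^ (α - v)) :=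
      hζ2.pow_of_coprime u hcop
    set μ : ℂ := ζ ^ d with hμdef
    have hμeq : μ = (ζ ^ (p ^ v)) ^ u := by
      rw [hμdef, ← pow_mul, hdu]
    have hμprim : IsPrimitiveRoot μ (p ^ (α - v)) := hμeq ▸ hζ3
    -- μ is the exponential appearing in hspec
    have hθd : (θ i : ℂ) - (θ j : ℂ) = (d : ℂ) / ((p ^ α : ℕ) : ℂ) := by
      have hr : θ i - θ j = (d : ℝ) / ((p ^ α : ℕ) : ℝ) := by
        rw [hkval i, hkval j, hd, Nat.cast_sub hlt.le]
        ring
      calc (θ i : ℂ) - (θ j : ℂ) = ((θ i - θ j : ℝ) : ℂ) := by push_cast; ring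
        _ = (d : ℂ) / ((p ^ α : ℕ) : ℂ) := by rw [hr]; push_cast; ring
    have hexp : Complex.exp (2 * Real.pi * Complex.I * ((θ i : ℂ) - (θ j : ℂ))) = μ := by
      rw [hμdef, hζdef, ← Complex.exp_nat_mul, hθd]
      congr 1
      have : ((p ^ α : ℕ) : ℂ) ≠ 0 := by exact_mod_cast hpαpos.ne'
      field_simp
    have hij : i ≠ j := by
      intro h; rw [h] at hlt; exact lt_irrefl _ hlt
    have hsum : ∑ a ∈ A, μ ^ a = 0 := by
      rw [← hexp]; exact hspec i j hij
    have haev : Polynomial.aeval μ P = 0 := by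
      rw [hPdef, map_sum]
      simpa using hsum
    rw [Polynomial.cyclotomic_eq_minpoly hμprim (pow_pos hp.pos _)]
    exact minpoly.isIntegrallyClosed_dvd (hμprim.isIntegral (pow_pos hp.pos _)) haev
  -- product of cyclotomics divides P
  have hprodQ : (∏ v ∈ V, Polynomial.cyclotomic (p ^ (α - v)) ℚ) ∣
      P.map (Int.castRingHom ℚ) := by
    refine Finset.prod_dvd_of_coprime ?_ ?_
    · intro v hv w hw hvw
      refine Polynomial.cyclotomic.isCoprime_rat ?_
      have hvα : v < α := hVlt v (by simpa using hv)
      have hwα : w < α := hVlt w (by simpa using hw)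
      intro h
      have := Nat.pow_right_injective hp.two_le h
      omega
    · intro v hv
      rw [← Polynomial.map_cyclotomic_int]
      exact Polynomial.map_dvd _ (hdvd v hv)
  have hmono : (∏ v ∈ V, Polynomial.cyclotomic (p ^ (α - v)) ℤ).Monic :=
    Polynomial.monic_prod_of_monic _ _ fun v _ => Polynomial.cyclotomic.monic _ ℤ
  have hprodZ : (∏ v ∈ V, Polynomial.cyclotomic (p ^ (α - v)) ℤ) ∣ P := by
    rw [← Polynomial.map_dvd_map (Int.castRingHom ℚ)
      (fun a b h => by simpa using h) hmono]
    rw [Polynomial.map_prod]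
    simpa [Polynomial.map_cyclotomic_int] using hprodQ
  obtain ⟨Q, hQ⟩ := hprodZ
  have hevalprod : ∀ v ∈ V,
      Polynomial.eval (1:ℤ) (Polynomial.cyclotomic (p ^ (α - v)) ℤ) = (p : ℤ) := by
    intro v hv
    obtain ⟨w, hw⟩ : ∃ w, α - v = w + 1 := ⟨α - v - 1, by have := hVlt v hv; omega⟩
    rw [hw]
    exact Polynomial.eval_one_cyclotomic_prime_pow w
  have hNint : (N : ℤ) = (p : ℤ) ^ V.card * Q.eval 1 := by
    have := congrArg (Polynomial.eval (1:ℤ)) hQ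
    rw [hP1, Polynomial.eval_mul, Polynomial.eval_prod,
      Finset.prod_congr rfl hevalprod, Finset.prod_const] at this
    exact this
  have hlb : p ^ V.card ∣ N := by
    have : ((p ^ V.card : ℕ) : ℤ) ∣ (N : ℤ) := ⟨Q.eval 1, by push_cast; exact hNint⟩
    exact_mod_cast this
  exact ⟨V.card, le_antisymm hub (Nat.le_of_dvd hNpos hlb)⟩
end

section
/- Suppose A ⊂ {0,1,...,M-1} ⊂ ℤ with 0 ∈ A, N = #A, M < 3N/2, and A tiles ℤ by translations (i.e., there is B ⊂ ℤ with A ⊕ B = ℤ, every integer uniquely a + b). Then A is a complete set of residues modulo N, i.e., the reduction map A → ℤ/Nℤ is a bijection. -/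
set_option maxHeartbeats 1600000

/-- Key lemma: under the tiling hypotheses, no two elements of `A` differ by exactly `N`. -/
theorem stmt9_key (M N : ℕ) (A : Finset ℤ)
    (hA : ∀ a ∈ A, 0 ≤ a ∧ a < M) (h0A : (0 : ℤ) ∈ A)
    (hN : N = A.card) (hM : 2 * M < 3 * N)
    (B : Set ℤ)
    (hB : ∀ n : ℤ, ∃! ab : ℤ × ℤ, ab.1 ∈ A ∧ ab.2 ∈ B ∧ n = ab.1 + ab.2)
    (a₀ : ℤ) (ha₀ : a₀ ∈ A) (ha₀N : a₀ + (N : ℤ) ∈ A) : False := by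
  classical
  have hAne : A.Nonempty := ⟨0, h0A⟩
  set m : ℤ := A.max' hAne + 1 with hm
  have hmemlt : ∀ x ∈ A, x < m := by
    intro x hx; have := A.le_max' x hx; omega
  have hmemge : ∀ x ∈ A, 0 ≤ x := fun x hx => (hA x hx).1
  have hm1A : m - 1 ∈ A := by
    have h := A.max'_mem hAne
    have hh : A.max' hAne = m - 1 := by omega
    rwa [hh] at h
  have hm1 : 1 ≤ m := by have := hmemge _ hm1A; omega
  have hNm : (N : ℤ) ≤ m := by
    have hsub : A ⊆ Finset.Icc 0 (m - 1) := by
      intro x hx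
      rw [Finset.mem_Icc]
      exact ⟨hmemge x hx, by have := hmemlt x hx; omega⟩
    have h1 : A.card ≤ (Finset.Icc (0 : ℤ) (m - 1)).card := Finset.card_le_card hsub
    rw [Int.card_Icc] at h1
    omega
  have hmM : m ≤ (M : ℤ) := by
    have h1 := (hA _ hm1A).2
    omega
  have hMN : 2 * (M : ℤ) < 3 * (N : ℤ) := by exact_mod_cast hM
  set g : ℤ := m - (N : ℤ) with hg
  have hg1 : 1 ≤ g := by
    have h1 := hmemlt _ ha₀N
    have h2 := hmemge _ ha₀
    omega
  have h2g : 2 * g < (N : ℤ) := by omega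
  -- uniqueness of representations
  have huniq : ∀ x y bx bz : ℤ, x ∈ A → y ∈ A → bx ∈ B → bz ∈ B →
      x + bx = y + bz → x = y ∧ bx = bz := by
    intro x y bx bz hx hy hbx hbz hxy
    obtain ⟨p, _, hp⟩ := hB (x + bx)
    have h1 := hp (x, bx) ⟨hx, hbx, rfl⟩
    have h2 := hp (y, bz) ⟨hy, hbz, hxy⟩
    have h3 := h1.trans h2.symm
    exact ⟨congrArg Prod.fst h3, congrArg Prod.snd h3⟩
  have hexist : ∀ p : ℤ, ∃ x b, x ∈ A ∧ b ∈ B ∧ p = x + b := by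
    intro p
    obtain ⟨⟨x, b⟩, ⟨h1, h2, h3⟩, _⟩ := hB p
    exact ⟨x, b, h1, h2, h3⟩
  have hdisj : ∀ b b' : ℤ, b ∈ B → b' ∈ B → b ≠ b' → ∀ x ∈ A, x + (b' - b) ∉ A := by
    intro b b' hb hb' hne x hx hmem
    have h := huniq (x + (b' - b)) x b b' hmem hx hb hb' (by ring)
    exact hne h.2
  have hdiffA : ∀ b b' : ℤ, b ∈ B → b' ∈ B → b ≠ b' → (b' - b) ∉ A := by
    intro b b' hb hb' hne hmem
    have h := hdisj b b' hb hb' hne 0 h0A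
    rw [zero_add] at h
    exact h hmem
  have hdiff_ge : ∀ b b' : ℤ, b ∈ B → b' ∈ B → b < b' → (N : ℤ) - g ≤ b' - b := by
    intro b b' hb hb' hlt
    by_contra hcon
    push_neg at hcon
    set t := b' - b with htdef
    have hd' : ∀ x ∈ A, x + t ∉ A := hdisj b b' hb hb' (by omega)
    have himg : (A.image (· + t)).card = A.card :=
      Finset.card_image_of_injective _ (add_left_injective t)
    have hdisj2 : Disjoint A (A.image (· + t)) := by
      rw [Finset.disjoint_right]
      intro x hx hxA
      obtain ⟨y, hy, rfl⟩ := Finset.mem_image.mp hx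
      exact hd' y hy hxA
    have hsub2 : A ∪ A.image (· + t) ⊆ Finset.Icc 0 (m - 1 + t) := by
      intro x hx
      rw [Finset.mem_union] at hx
      rw [Finset.mem_Icc]
      rcases hx with hx | hx
      · have h1 := hmemge x hx; have h2 := hmemlt x hx; omega
      · obtain ⟨y, hy, rfl⟩ := Finset.mem_image.mp hx
        have h1 := hmemge y hy; have h2 := hmemlt y hy; omega
    have hcard := Finset.card_le_card hsub2
    rw [Finset.card_union_of_disjoint hdisj2, himg, Int.card_Icc] at hcard
    omega
  have hdiff_ne : ∀ b b' : ℤ, b ∈ B → b' ∈ B → b ≠ b' → b' - b ≠ (N : ℤ) := by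
    intro b b' hb hb' hne heq
    have h := hdisj b b' hb hb' hne a₀ ha₀
    rw [heq] at h
    exact h ha₀N
  -- successor function on B
  have hsucc : ∀ b ∈ B, ∃ s, (s ∈ B ∧ b < s) ∧ ∀ z ∈ B, b < z → s ≤ z := by
    intro b hb
    obtain ⟨x, b', hx, hb', hpb⟩ := hexist (b + m)
    have hrange : b < b' := by
      have := hmemlt x hx; omega
    obtain ⟨lb, hlb, hmin⟩ := Int.exists_least_of_bdd
      (P := fun z => z ∈ B ∧ b < z)
      ⟨b + 1, fun z hz => by omega⟩ ⟨b', hb', hrange⟩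
    exact ⟨lb, ⟨hlb.1, hlb.2⟩, fun z hz hbz => hmin z ⟨hz, hbz⟩⟩
  choose! S hS using hsucc
  have hS1 : ∀ b, b ∈ B → S b ∈ B := fun b hb => ((hS b hb).1).1
  have hS2 : ∀ b, b ∈ B → b < S b := fun b hb => ((hS b hb).1).2
  have hS3 : ∀ b, b ∈ B → ∀ z ∈ B, b < z → S b ≤ z := fun b hb => (hS b hb).2
  obtain ⟨x0, b₀, _, hb₀, _⟩ := hexist 0
  set c : ℕ → ℤ := fun i => S^[i] b₀ with hcdef
  have hcstep : ∀ i, c (i + 1) = S (c i) := by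
    intro i
    simp only [hcdef]
    exact Function.iterate_succ_apply' S i b₀
  have hcB : ∀ i, c i ∈ B := by
    intro i
    induction i with
    | zero => simpa [hcdef] using hb₀
    | succ i ih => rw [hcstep]; exact hS1 _ ih
  have hclt : ∀ i, c i < c (i + 1) := by
    intro i; rw [hcstep]; exact hS2 _ (hcB i)
  have hcmin : ∀ i, ∀ z ∈ B, c i < z → c (i + 1) ≤ z := by
    intro i z hz h; rw [hcstep]; exact hS3 _ (hcB i) z hz h
  set d : ℕ → ℤ := fun i => c (i + 1) - c i with hddef
  have hd : ∀ i, d i = c (i + 1) - c i := fun i => rfl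
  have hd_lb : ∀ i, (N : ℤ) - g ≤ d i := by
    intro i
    rw [hd]
    exact hdiff_ge _ _ (hcB i) (hcB (i + 1)) (hclt i)
  have hd_ne : ∀ i, d i ≠ (N : ℤ) := by
    intro i
    rw [hd]
    exact hdiff_ne _ _ (hcB i) (hcB (i + 1)) (ne_of_lt (hclt i))
  have hcmono : ∀ i t : ℕ, c i ≤ c (i + t) := by
    intro i t
    induction t with
    | zero => simp
    | succ t ih =>
      have h1 := hclt (i + t)
      have h2 : i + (t + 1) = (i + t) + 1 := by omega
      rw [h2]; omega
  have hcmono' : ∀ i j : ℕ, i ≤ j → c i ≤ c j := by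
    intro i j hij
    have := hcmono i (j - i)
    rwa [Nat.add_sub_cancel' hij] at this
  have hcstrict : ∀ i j : ℕ, i < j → c i < c j := by
    intro i j hij
    have h1 : c i ≤ c (j - 1) := hcmono' i (j - 1) (by omega)
    have h2 := hclt (j - 1)
    have h3 : (j - 1) + 1 = j := by omega
    rw [h3] at h2
    omega
  have hbetween : ∀ r : ℕ, ∀ z ∈ B, c 0 ≤ z → z < c r → ∃ i, i < r ∧ z = c i := by
    intro r
    induction r with
    | zero => intro z hz h1 h2; exfalso; omega
    | succ r ih =>
      intro z hz h1 h2
      by_cases hlt : z < c r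
      · obtain ⟨i, hi, heq⟩ := ih z hz h1 hlt
        exact ⟨i, by omega, heq⟩
      · push_neg at hlt
        rcases eq_or_lt_of_le hlt with heq | hlt'
        · exact ⟨r, by omega, heq.symm⟩
        · have := hcmin r z hz hlt'
          omega
  have tele : ∀ i r : ℕ, (∑ j ∈ Finset.Ico i (i + r), d j) = c (i + r) - c i := by
    intro i r
    induction r with
    | zero => simp
    | succ r ih =>
      have h1 : i + (r + 1) = (i + r) + 1 := by omega
      rw [h1, Finset.sum_Ico_succ_top (by omega : i ≤ i + r), ih, hd]
      ring
  -- lower bound on window length (disjointness of translates)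
  have count_lb : ∀ i r : ℕ, ((r : ℤ) + 1) * (N : ℤ) ≤ c (i + r) - c i + m := by
    intro i r
    set U := (Finset.range (r + 1)).biUnion (fun t => A.image (· + c (i + t))) with hU
    have hdisjU : ∀ t1 ∈ Finset.range (r + 1), ∀ t2 ∈ Finset.range (r + 1),
        t1 ≠ t2 → Disjoint (A.image (· + c (i + t1))) (A.image (· + c (i + t2))) := by
      intro t1 _ t2 _ hne
      rw [Finset.disjoint_left]
      intro x hx1 hx2
      obtain ⟨y1, hy1, hxy1⟩ := Finset.mem_image.mp hx1
      obtain ⟨y2, hy2, hxy2⟩ := Finset.mem_image.mp hx2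
      have hcc : c (i + t1) = c (i + t2) :=
        (huniq y1 y2 (c (i + t1)) (c (i + t2)) hy1 hy2 (hcB _) (hcB _) (by omega)).2
      have hit : i + t1 = i + t2 := by
        by_contra hc
        rcases Nat.lt_or_ge (i + t1) (i + t2) with h | h
        · have := hcstrict _ _ h; omega
        · have h' : i + t2 < i + t1 := by omega
          have := hcstrict _ _ h'; omega
      omega
    have hcardU : U.card = (r + 1) * A.card := by
      rw [hU, Finset.card_biUnion hdisjU]
      have hc : ∀ t ∈ Finset.range (r + 1), (A.image (· + c (i + t))).card = A.card := by
        intro t _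
        exact Finset.card_image_of_injective _ (add_left_injective _)
      rw [Finset.sum_congr rfl hc, Finset.sum_const, Finset.card_range, smul_eq_mul]
    have hsubU : U ⊆ Finset.Icc (c i) (c (i + r) + (m - 1)) := by
      intro x hx
      rw [hU, Finset.mem_biUnion] at hx
      obtain ⟨t, ht, hx⟩ := hx
      obtain ⟨y, hy, rfl⟩ := Finset.mem_image.mp hx
      rw [Finset.mem_range] at ht
      have h1 := hmemge y hy
      have h2 := hmemlt y hy
      have h3 : c i ≤ c (i + t) := hcmono' i (i + t) (by omega)
      have h4 : c (i + t) ≤ c (i + r) := hcmono' (i + t) (i + r) (by omega)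
      rw [Finset.mem_Icc]
      omega
    have hle := Finset.card_le_card hsubU
    rw [hcardU, Int.card_Icc] at hle
    have hnn : (0 : ℤ) ≤ c (i + r) + (m - 1) + 1 - c i := by
      have := hcmono' i (i + r) (by omega); omega
    have hle2 : (((r + 1) * A.card : ℕ) : ℤ) ≤ c (i + r) + (m - 1) + 1 - c i := by
      calc (((r + 1) * A.card : ℕ) : ℤ) ≤ ((c (i + r) + (m - 1) + 1 - c i).toNat : ℤ) := by
            exact_mod_cast hle
        _ = _ := Int.toNat_of_nonneg hnn
    have hEq : (((r + 1) * A.card : ℕ) : ℤ) = ((r : ℤ) + 1) * (N : ℤ) := by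
      push_cast [hN]
      ring
    rw [hEq] at hle2
    linarith
  -- crude upper bound on window length (coverage)
  have count_ub : ∀ r : ℕ, c r - c 0 ≤ (N : ℤ) * (m + r) := by
    intro r
    set F := (Finset.Ioo (c 0 - m) (c 0)) ∪ (Finset.range r).image c with hF
    have hstep : ∀ p ∈ Finset.Ico (c 0) (c r),
        ∃ xb : ℤ × ℤ, xb.1 ∈ A ∧ xb.2 ∈ F ∧ p = xb.1 + xb.2 := by
      intro p hp
      rw [Finset.mem_Ico] at hp
      obtain ⟨x, b, hx, hb, hpb⟩ := hexist p
      refine ⟨(x, b), hx, ?_, hpb⟩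
      have h1 := hmemge x hx
      have h2 := hmemlt x hx
      by_cases hc : b < c 0
      · apply Finset.mem_union_left
        rw [Finset.mem_Ioo]
        omega
      · push_neg at hc
        obtain ⟨i, hir, heq⟩ := hbetween r b hb hc (by omega)
        exact Finset.mem_union_right _ (Finset.mem_image.mpr ⟨i, Finset.mem_range.mpr hir, heq.symm⟩)
    choose! fxb hfx hfb hfp using hstep
    have hinj : Set.InjOn fxb (Finset.Ico (c 0) (c r)) := by
      intro p1 h1 p2 h2 heq
      simp only [Finset.mem_coe] at h1 h2
      have e1 := hfp p1 h1
      have e2 := hfp p2 h2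
      rw [heq] at e1
      omega
    have hcard := Finset.card_le_card_of_injOn fxb
      (fun p hp => Finset.mem_product.mpr ⟨hfx p hp, hfb p hp⟩) hinj
    rw [Finset.card_product] at hcard
    have hFcard : (F.card : ℤ) ≤ (m - 1) + r := by
      have h1 := Finset.card_union_le (Finset.Ioo (c 0 - m) (c 0)) ((Finset.range r).image c)
      have h2 := Finset.card_image_le (s := Finset.range r) (f := c)
      rw [Finset.card_range] at h2
      have h3 : (Finset.Ioo (c 0 - m) (c 0)).card = (m - 1).toNat := by
        rw [Int.card_Ioo]
        omega
      rw [← hF] at h1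
      omega
    have h5 : ((Finset.Ico (c 0) (c r)).card : ℤ) ≤ (A.card : ℤ) * (F.card : ℤ) := by
      exact_mod_cast hcard
    have h6 : c r - c 0 ≤ ((Finset.Ico (c 0) (c r)).card : ℤ) := by
      rw [Int.card_Ico]
      omega
    have hNA : (A.card : ℤ) = (N : ℤ) := by rw [hN]
    have h7 : (A.card : ℤ) * (F.card : ℤ) ≤ (N : ℤ) * ((m - 1) + r) := by
      rw [hNA]
      apply mul_le_mul_of_nonneg_left hFcard (Int.natCast_nonneg N)
    have h8 : (N : ℤ) * ((m - 1) + r) ≤ (N : ℤ) * (m + r) := by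
      apply mul_le_mul_of_nonneg_left (by omega) (Int.natCast_nonneg N)
    linarith
  -- some gap is < N
  have hsmall_ex : ∃ j : ℕ, d j < (N : ℤ) := by
    by_contra hcon
    push_neg at hcon
    set r : ℕ := ((N : ℤ) * m).toNat + 1 with hr
    have hbig : ∀ j ∈ Finset.Ico 0 (0 + r), (N : ℤ) + 1 ≤ d j := by
      intro j _
      have h1 := hcon j
      have h2 := hd_ne j
      omega
    have hsum := Finset.card_nsmul_le_sum (Finset.Ico 0 (0 + r)) d ((N : ℤ) + 1) hbig
    rw [tele 0 r, Nat.card_Ico] at hsum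
    simp only [Nat.zero_add, Nat.sub_zero] at hsum
    have hup := count_ub r
    have hrz : (r : ℤ) = (N : ℤ) * m + 1 := by
      rw [hr]
      push_cast
      rw [Int.toNat_of_nonneg (mul_nonneg (Int.natCast_nonneg N) (by omega))]
    have hsum' : (r : ℤ) * ((N : ℤ) + 1) ≤ c r - c 0 := by
      rw [← nsmul_eq_mul]
      exact_mod_cast hsum
    nlinarith [hup, hsum', hrz]
  -- minimal gap
  obtain ⟨dm, hdmP, hdm_min⟩ := Int.exists_least_of_bdd
    (P := fun v => ∃ j : ℕ, d j = v)
    ⟨(N : ℤ) - g, by rintro z ⟨j, rfl⟩; exact hd_lb j⟩ ⟨d 0, 0, rfl⟩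
  obtain ⟨jm, hjm⟩ := hdmP
  have hdm_le : ∀ j, dm ≤ d j := fun j => hdm_min (d j) ⟨j, rfl⟩
  have hdmlb : (N : ℤ) - g ≤ dm := by
    have := hd_lb jm; omega
  have hdm_lt : dm < (N : ℤ) := by
    obtain ⟨j, hj⟩ := hsmall_ex
    have := hdm_le j; omega
  set k : ℤ := (N : ℤ) - dm with hk
  have hk1 : 1 ≤ k := by omega
  have hkg : k ≤ g := by omega
  -- interval lemma
  have lemA : ∀ (i : ℕ) (x : ℤ), m - d i ≤ x → x < d (i + 1) → x ∈ A := by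
    intro i x h1 h2
    obtain ⟨x₃, b₃, hx₃, hb₃, hpb⟩ := hexist (c (i + 1) + x)
    have hx₃1 := hmemge x₃ hx₃
    have hx₃2 := hmemlt x₃ hx₃
    have hdi : d i = c (i + 1) - c i := hd i
    have hdi1 : d (i + 1) = c (i + 2) - c (i + 1) := hd (i + 1)
    have hgt : c i < b₃ := by omega
    have hge : c (i + 1) ≤ b₃ := hcmin i b₃ hb₃ hgt
    have hlt2 : b₃ < c (i + 2) := by omega
    have heq : b₃ = c (i + 1) := by
      rcases eq_or_lt_of_le hge with h | h
      · exact h.symm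
      · exfalso
        have h4 := hcmin (i + 1) b₃ hb₃ h
        have h5 : i + 1 + 1 = i + 2 := by omega
        rw [h5] at h4
        omega
    have hxx : x₃ = x := by omega
    rwa [← hxx]
  have lemB : ∀ i j : ℕ, ¬ (m - d i ≤ d j ∧ d j < d (i + 1)) := by
    rintro i j ⟨h1, h2⟩
    have hmem := lemA i (d j) h1 h2
    exact hdiffA (c j) (c (j + 1)) (hcB j) (hcB (j + 1)) (ne_of_lt (hclt j)) ((hd j) ▸ hmem)
  have s3 : ∀ i : ℕ, (N : ℤ) < d i → d (i + 1) = dm := by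
    intro i hbig
    have h1 : m - d i ≤ dm := by omega
    have h2 : d (i + 1) ≤ dm := by
      by_contra hc
      push_neg at hc
      exact lemB i jm ⟨by omega, by omega⟩
    have := hdm_le (i + 1)
    omega
  have s3' : ∀ i : ℕ, (N : ℤ) < d (i + 1) → d i < (N : ℤ) := by
    intro i hbig
    by_contra hc
    push_neg at hc
    have h1 : (N : ℤ) < d i := by have := hd_ne i; omega
    have h2 := s3 i h1
    omega
  set H : ℕ := g.toNat with hH
  have hHz : (H : ℤ) = g := by
    rw [hH]; exact Int.toNat_of_nonneg (by omega)
  -- every window of H+1 consecutive gaps contains a big gap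
  have g4 : ∀ i : ℕ, ∃ j, i ≤ j ∧ j ≤ i + H ∧ (N : ℤ) < d j := by
    intro i
    by_contra hcon
    push_neg at hcon
    have hsmall : ∀ j ∈ Finset.Ico i (i + (H + 1)), d j ≤ (N : ℤ) - 1 := by
      intro j hj
      rw [Finset.mem_Ico] at hj
      have h1 := hcon j (by omega) (by omega)
      have h2 := hd_ne j
      omega
    have hsum := Finset.sum_le_card_nsmul (Finset.Ico i (i + (H + 1))) d ((N : ℤ) - 1) hsmall
    rw [tele i (H + 1), Nat.card_Ico] at hsum
    have hsum' : c (i + (H + 1)) - c i ≤ ((H : ℤ) + 1) * ((N : ℤ) - 1) := by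
      have hcst : ((i + (H + 1) - i : ℕ) : ℤ) = (H : ℤ) + 1 := by push_cast; omega
      calc c (i + (H + 1)) - c i ≤ ((i + (H + 1) - i : ℕ) : ℤ) * ((N : ℤ) - 1) := by
            rw [← nsmul_eq_mul]; exact_mod_cast hsum
        _ = ((H : ℤ) + 1) * ((N : ℤ) - 1) := by rw [hcst]
    have hlb := count_lb i (H + 1)
    have hlb' : ((H : ℤ) + 2) * (N : ℤ) ≤ c (i + (H + 1)) - c i + m := by
      have hcst : (((H + 1) : ℕ) : ℤ) + 1 = (H : ℤ) + 2 := by push_cast; ring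
      calc ((H : ℤ) + 2) * (N : ℤ) = ((((H + 1) : ℕ) : ℤ) + 1) * (N : ℤ) := by rw [hcst]
        _ ≤ c (i + (H + 1)) - c i + m := hlb
    nlinarith [hsum', hlb', hHz]
  -- fixed big gap with predecessor
  obtain ⟨i₁, hi₁1, _, hi₁big⟩ := g4 1
  obtain ⟨p, rfl⟩ : ∃ p, i₁ = p + 1 := ⟨i₁ - 1, by omega⟩
  have hpred : d p < (N : ℤ) := s3' p hi₁big
  set k₀ : ℤ := (N : ℤ) - d p with hk₀
  have hk₀1 : 1 ≤ k₀ := by omega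
  have hk₀k : k₀ ≤ k := by have := hdm_le p; omega
  have s5 : ∀ j : ℕ, d j < (N : ℤ) → d j < g + k₀ := by
    intro j hj
    have hnot := lemB p j
    by_contra hc
    push_neg at hc
    exact hnot ⟨by omega, by omega⟩
  have s4 : ∀ i : ℕ, (N : ℤ) < d (i + 1) → 2 * (d (i + 1) - (N : ℤ)) ≤ g - k := by
    intro i hbig
    set l : ℤ := d (i + 1) - (N : ℤ) with hl
    have hl1 : 1 ≤ l := by omega
    have hpredi : d i < (N : ℤ) := s3' i hbig
    set k₀' : ℤ := (N : ℤ) - d i with hk₀'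
    have hk₀'1 : 1 ≤ k₀' := by omega
    have hk₀'k : k₀' ≤ k := by have := hdm_le i; omega
    have hdm2 : d (i + 1 + 1) = dm := s3 (i + 1) hbig
    by_contra hcon
    push_neg at hcon
    set y : ℤ := max (g - l + dm) (g + k₀') with hy
    have hyA : y ∈ A := by
      apply lemA i
      · have h1 : g + k₀' ≤ y := le_max_right _ _
        omega
      · have h1 : g - l + dm < (N : ℤ) + l := by omega
        have h2 : g + k₀' < (N : ℤ) + l := by omega
        have h3 : y < (N : ℤ) + l := by rw [hy]; exact max_lt h1 h2
        omega
    have hy2A : y - dm ∈ A := by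
      apply lemA (i + 1)
      · have h1 : g - l + dm ≤ y := le_max_left _ _
        omega
      · rw [hdm2]
        have h1 : g - l + dm < 2 * dm := by omega
        have h2 : g + k₀' < 2 * dm := by omega
        have h3 : y < 2 * dm := by rw [hy]; exact max_lt h1 h2
        omega
    have hne : c jm ≠ c (jm + 1) := ne_of_lt (hclt jm)
    have hforb := hdisj (c jm) (c (jm + 1)) (hcB jm) (hcB (jm + 1)) hne (y - dm) hy2A
    apply hforb
    have e1 : c (jm + 1) - c jm = dm := by rw [← hd]; exact hjm
    rw [e1]
    have e2 : y - dm + dm = y := by ring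
    rw [e2]
    exact hyA
  set q : ℤ := g - k with hq
  have hq2 : 2 ≤ q := by
    have := s4 p hi₁big
    omega
  -- final counting window
  set r : ℕ := (H + 1) * (H + 2) with hr
  set J := Finset.Ico 1 (r + 1) with hJ
  set Sm := J.filter (fun j => d j < (N : ℤ)) with hSm
  set Bg := J.filter (fun j => (N : ℤ) < d j) with hBg
  have hBgalt : J.filter (fun j => ¬ d j < (N : ℤ)) = Bg := by
    rw [hBg]
    apply Finset.filter_congr
    intro j _
    have := hd_ne j
    constructor
    · intro h; omega
    · intro h; omega
  have hSG : Sm.card + Bg.card = r := by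
    have h1 := Finset.card_filter_add_card_filter_not
      (s := J) (p := fun j => d j < (N : ℤ))
    rw [hBgalt, ← hSm] at h1
    rw [hJ, Nat.card_Ico] at h1
    omega
  have hS_ge : Bg.card ≤ Sm.card + 1 := by
    have hmap : ∀ j ∈ Bg, j - 1 ∈ Sm ∪ {0} := by
      intro j hj
      rw [hBg, Finset.mem_filter, hJ, Finset.mem_Ico] at hj
      obtain ⟨⟨hj1, hj2⟩, hjbig⟩ := hj
      by_cases h0 : j = 1
      · subst h0
        simp
      · apply Finset.mem_union_left
        rw [hSm, Finset.mem_filter, hJ, Finset.mem_Ico]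
        have hD : d ((j - 1) + 1) = d j := by congr 1; omega
        refine ⟨⟨by omega, by omega⟩, ?_⟩
        exact s3' (j - 1) (by rw [hD]; exact hjbig)
    have hinj : Set.InjOn (fun j => j - 1) Bg := by
      intro x hx y hy hxy
      simp only [Finset.mem_coe] at hx hy
      rw [hBg, Finset.mem_filter, hJ, Finset.mem_Ico] at hx hy
      simp only at hxy
      omega
    have h1 := Finset.card_le_card_of_injOn _ hmap hinj
    have h2 : (Sm ∪ {0}).card ≤ Sm.card + 1 := by
      apply le_trans (Finset.card_union_le _ _)
      simp
    omega
  have hG_ge : H + 2 ≤ Bg.card := by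
    have hpick : ∀ t ∈ Finset.range (H + 2),
        ∃ j, j ∈ Bg ∧ 1 + t * (H + 1) ≤ j ∧ j ≤ 1 + t * (H + 1) + H := by
      intro t ht
      rw [Finset.mem_range] at ht
      obtain ⟨j, hj1, hj2, hj3⟩ := g4 (1 + t * (H + 1))
      refine ⟨j, ?_, hj1, hj2⟩
      rw [hBg, Finset.mem_filter, hJ, Finset.mem_Ico]
      have hbound : t * (H + 1) + (H + 1) ≤ (H + 1) * (H + 2) := by
        calc t * (H + 1) + (H + 1) = (t + 1) * (H + 1) := by ring
          _ ≤ (H + 2) * (H + 1) := Nat.mul_le_mul_right _ (by omega)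
          _ = (H + 1) * (H + 2) := by ring
      have hjr : j ≤ r := by
        calc j ≤ 1 + t * (H + 1) + H := hj2
          _ = t * (H + 1) + (H + 1) := by ring
          _ ≤ (H + 1) * (H + 2) := hbound
          _ = r := by rw [hr]
      exact ⟨⟨le_trans (Nat.le_add_right 1 _) hj1, by omega⟩, hj3⟩
    choose! pick hpickBg hpick1 hpick2 using hpick
    have hinj2 : Set.InjOn pick (Finset.range (H + 2)) := by
      intro t1 ht1 t2 ht2 heq
      simp only [Finset.mem_coe] at ht1 ht2
      by_contra hne
      have hkey : ∀ u v : ℕ, u ∈ Finset.range (H + 2) → v ∈ Finset.range (H + 2) →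
          u < v → pick u < pick v := by
        intro u v hu hv huv
        have h1 := hpick2 u hu
        have h2 := hpick1 v hv
        have hstep : u * (H + 1) + (H + 1) ≤ v * (H + 1) := by
          calc u * (H + 1) + (H + 1) = (u + 1) * (H + 1) := by ring
            _ ≤ v * (H + 1) := Nat.mul_le_mul_right _ huv
        obtain ⟨X, hX⟩ : ∃ X, u * (H + 1) = X := ⟨_, rfl⟩
        obtain ⟨Y, hY⟩ : ∃ Y, v * (H + 1) = Y := ⟨_, rfl⟩
        rw [hX] at h1 hstep
        rw [hY] at h2 hstep
        omega
      rcases Nat.lt_or_ge t1 t2 with h | h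
      · have := hkey t1 t2 ht1 ht2 h; omega
      · have ht2t1 : t2 < t1 := by omega
        have := hkey t2 t1 ht2 ht1 ht2t1; omega
    have h1 := Finset.card_le_card_of_injOn pick (fun t ht => hpickBg t ht) hinj2
    rwa [Finset.card_range] at h1
  -- sums
  have hJeq : Finset.Ico 1 (1 + r) = J := by rw [hJ, Nat.add_comm]
  have hsum_eq : (∑ j ∈ J, d j) = c (1 + r) - c 1 := by
    rw [← hJeq]
    exact tele 1 r
  have hsplit : (∑ j ∈ J, 2 * d j) = (∑ j ∈ Sm, 2 * d j) + (∑ j ∈ Bg, 2 * d j) := by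
    have h1 := Finset.sum_filter_add_sum_filter_not J (fun j => d j < (N : ℤ)) (fun j => 2 * d j)
    rw [hBgalt, ← hSm] at h1
    exact h1.symm
  have hsmall_bd : (∑ j ∈ Sm, 2 * d j) ≤ (Sm.card : ℤ) * (2 * (N : ℤ) - 2 * q - 4) := by
    have hb : ∀ j ∈ Sm, 2 * d j ≤ 2 * (N : ℤ) - 2 * q - 4 := by
      intro j hj
      rw [hSm, Finset.mem_filter] at hj
      have h1 := s5 j hj.2
      omega
    have := Finset.sum_le_card_nsmul Sm (fun j => 2 * d j) (2 * (N : ℤ) - 2 * q - 4) hb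
    rwa [nsmul_eq_mul] at this
  have hbig_bd : (∑ j ∈ Bg, 2 * d j) ≤ (Bg.card : ℤ) * (2 * (N : ℤ) + q) := by
    have hb : ∀ j ∈ Bg, 2 * d j ≤ 2 * (N : ℤ) + q := by
      intro j hj
      rw [hBg, Finset.mem_filter, hJ, Finset.mem_Ico] at hj
      obtain ⟨⟨hj1, _⟩, hjbig⟩ := hj
      obtain ⟨j', rfl⟩ : ∃ j', j = j' + 1 := ⟨j - 1, by omega⟩
      have := s4 j' hjbig
      omega
    have := Finset.sum_le_card_nsmul Bg (fun j => 2 * d j) (2 * (N : ℤ) + q) hb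
    rwa [nsmul_eq_mul] at this
  have hlow := count_lb 1 r
  have hsum2 : (∑ j ∈ J, 2 * d j) = 2 * (∑ j ∈ J, d j) := by
    rw [Finset.mul_sum]
  have hSGz : (Sm.card : ℤ) + (Bg.card : ℤ) = (r : ℤ) := by exact_mod_cast hSG
  have hSgez : (Bg.card : ℤ) ≤ (Sm.card : ℤ) + 1 := by exact_mod_cast hS_ge
  have hGgez : (H : ℤ) + 2 ≤ (Bg.card : ℤ) := by exact_mod_cast hG_ge
  have E : 2 * ((r : ℤ) * (N : ℤ)) + 2 * (N : ℤ) - 2 * m ≤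
      (Sm.card : ℤ) * (2 * (N : ℤ) - 2 * q - 4) + (Bg.card : ℤ) * (2 * (N : ℤ) + q) := by
    have h2 : 2 * (∑ j ∈ J, d j) = 2 * (c (1 + r) - c 1) := by rw [hsum_eq]
    linarith [hsplit, hsmall_bd, hbig_bd, hlow, h2, hsum2]
  have e4 : 2 * (N : ℤ) * ((Sm.card : ℤ) + (Bg.card : ℤ)) = 2 * (N : ℤ) * (r : ℤ) := by
    rw [hSGz]
  have E3 : (Sm.card : ℤ) * (2 * q + 4) ≤ (Bg.card : ℤ) * q + 2 * g := by
    linarith [E, e4]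
  have E4 : ((Bg.card : ℤ) - 1) * (2 * q + 4) ≤ (Sm.card : ℤ) * (2 * q + 4) := by
    apply mul_le_mul_of_nonneg_right (by linarith [hSgez]) (by linarith [hq2])
  have E5 : (Bg.card : ℤ) * (q + 4) ≤ 2 * g + 2 * q + 4 := by linarith [E3, E4]
  have hGc0 : (0 : ℤ) ≤ (Bg.card : ℤ) := Int.natCast_nonneg _
  have E6 : (0 : ℤ) ≤ (Bg.card : ℤ) * (q - 2) := mul_nonneg hGc0 (by linarith [hq2])
  have E7 : 6 * (Bg.card : ℤ) ≤ 2 * g + 2 * q + 4 := by linarith [E5, E6]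
  have hqg : q ≤ g := by omega
  linarith [E7, hGgez, hHz, hqg, hg1]

theorem stmt9 (M N : ℕ) (A : Finset ℤ)
    (hA : ∀ a ∈ A, 0 ≤ a ∧ a < M) (h0A : (0 : ℤ) ∈ A)
    (hN : N = A.card) (hM : 2 * M < 3 * N)
    (htile : ∃ B : Set ℤ, ∀ n : ℤ, ∃! ab : ℤ × ℤ,
      ab.1 ∈ A ∧ ab.2 ∈ B ∧ n = ab.1 + ab.2) :
    ∀ r : ZMod N, ∃! a, a ∈ A ∧ (a : ZMod N) = r := by
  classical
  obtain ⟨B, hB⟩ := htile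
  have hNpos : 0 < N := by
    have h1 : 0 < A.card := Finset.card_pos.mpr ⟨0, h0A⟩
    omega
  haveI : NeZero N := ⟨by omega⟩
  have hMN : 2 * (M : ℤ) < 3 * (N : ℤ) := by exact_mod_cast hM
  have key : ∀ a ∈ A, ∀ a' ∈ A, (a : ZMod N) = (a' : ZMod N) → a = a' := by
    intro a ha a' ha' hcast
    have hmod : ((a : ℤ) : ZMod N) = ((a' : ℤ) : ZMod N) := hcast
    rw [ZMod.intCast_eq_intCast_iff] at hmod
    have hdvd : ((N : ℕ) : ℤ) ∣ a' - a := Int.ModEq.dvd hmod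
    obtain ⟨t, ht⟩ := hdvd
    have hb1 := hA a ha
    have hb2 := hA a' ha'
    have ht1 : t = 0 ∨ t = 1 ∨ t = -1 := by
      by_contra hc
      push_neg at hc
      obtain ⟨h0, h1, h2⟩ := hc
      rcases lt_trichotomy t 0 with h | h | h
      · have hle : t ≤ -2 := by omega
        have : (N : ℤ) * t ≤ (N : ℤ) * (-2) :=
          mul_le_mul_of_nonneg_left hle (Int.natCast_nonneg N)
        linarith [hb1.1, hb1.2, hb2.1, hb2.2, ht]
      · exact h0 h
      · have hle : 2 ≤ t := by omega
        have : (N : ℤ) * 2 ≤ (N : ℤ) * t :=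
          mul_le_mul_of_nonneg_left hle (Int.natCast_nonneg N)
        linarith [hb1.1, hb1.2, hb2.1, hb2.2, ht]
    rcases ht1 with rfl | rfl | rfl
    · omega
    · exfalso
      have ha'eq : a' = a + (N : ℤ) := by omega
      exact stmt9_key M N A hA h0A hN hM B hB a ha (ha'eq ▸ ha')
    · exfalso
      have haeq : a = a' + (N : ℤ) := by omega
      exact stmt9_key M N A hA h0A hN hM B hB a' ha' (haeq ▸ ha)
  intro r
  have himg : A.image (fun a : ℤ => (a : ZMod N)) = Finset.univ := by
    apply Finset.eq_univ_of_card
    rw [Finset.card_image_of_injOn (fun a ha a' ha' h => key a ha a' ha' h), ← hN, ZMod.card]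
  have hr : r ∈ A.image (fun a : ℤ => (a : ZMod N)) := by
    rw [himg]; exact Finset.mem_univ r
  obtain ⟨a, ha, hae⟩ := Finset.mem_image.mp hr
  refine ⟨a, ⟨ha, hae⟩, ?_⟩
  rintro a' ⟨ha', hae'⟩
  exact key a' ha' a ha (by rw [hae, hae'])
end

section
/- Let A ⊂ ℤ≥0 finite with 0 ∈ A, N = #A ≥ 2, A(x) = Σ_{a∈A} x^a. Suppose A(x) has a spectrum θ₁,...,θ_{N-1} and the number of roots of A(x) on the unit circle is less than 3N/2 − 1. Then the set G = { e^{2πi(θᵢ-θⱼ)} : 0 ≤ i,j ≤ N-1 } (with θ₀ = 0) is a finite multiplicative group of complex numbers. -/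
/-!
Put `e i = exp (2πi θ i)` on the unit circle and `B = {e i}`, so that the set in question is
`B / B`. Every element of `B / B` other than `1` is a root of `A` on the unit circle, hence
`#(B / B) ≤ #roots + 1 < 3/2 · #B`. In an abelian group this small-difference condition
forces `B / B` to be a subgroup: for `g ∈ B / B` we get `#(g • B ∩ B) > #B / 2`, so for
`g, h ∈ B / B` the sets `g • (h • B ∩ B)` and `g • B ∩ B`, both inside `g • B`, must meet,
which gives `g * h ∈ B / B`.
-/

open Polynomial Complex Pointwise FourierTransform Finset

namespace Finset

variable {G : Type*} [CommGroup G] [DecidableEq G] {B : Finset G} {g h : G}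

lemma card_smul_finset_union_le_card_div (hg : g ∈ B / B) : #(g • B ∪ B) ≤ #(B / B) := by
  obtain ⟨u, hu, v, hv, rfl⟩ := mem_div.1 hg
  calc #((u / v) • B ∪ B) ≤ #(u • (B / B)) := by
        refine card_le_card (union_subset (fun x hx => ?_) (fun x hx => ?_))
        · obtain ⟨b, hb, rfl⟩ := mem_smul_finset.1 hx
          refine mem_smul_finset.2 ⟨b / v, div_mem_div hb hv, ?_⟩
          rw [smul_eq_mul, smul_eq_mul, mul_div_left_comm, mul_comm]
        · exact mem_smul_finset.2 ⟨x / u, div_mem_div hx hu, mul_div_cancel u x⟩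
    _ = #(B / B) := card_smul_finset u _

lemma card_lt_two_mul_card_smul_finset_inter (hB : 2 * #(B / B) < 3 * #B) (hg : g ∈ B / B) :
    #B < 2 * #(g • B ∩ B) := by
  have := card_union_add_card_inter (g • B) B
  have := card_smul_finset_union_le_card_div hg
  rw [card_smul_finset] at *
  omega

lemma mul_mem_div_self_of_two_mul_card_div_lt (hB : 2 * #(B / B) < 3 * #B) (hg : g ∈ B / B)
    (hh : h ∈ B / B) : g * h ∈ B / B := by
  obtain ⟨x, hx⟩ : (g • (h • B ∩ B) ∩ (g • B ∩ B)).Nonempty := by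
    have hsub : g • (h • B ∩ B) ∪ (g • B ∩ B) ⊆ g • B :=
      union_subset (smul_finset_subset_smul_finset inter_subset_right) inter_subset_left
    have hunion := card_le_card hsub
    have hhB := card_lt_two_mul_card_smul_finset_inter hB hh
    have hgB := card_lt_two_mul_card_smul_finset_inter hB hg
    have := card_union_add_card_inter (g • (h • B ∩ B)) (g • B ∩ B)
    rw [card_smul_finset] at hunion this
    rw [← card_pos]
    omega
  simp only [mem_inter, mem_smul_finset, smul_eq_mul] at hx
  obtain ⟨⟨_, ⟨⟨b, hb, rfl⟩, -⟩, rfl⟩, -, hxB⟩ := hx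
  exact mem_div.2 ⟨_, hxB, b, hb, by rw [← mul_assoc, mul_div_cancel_right]⟩

def divSubgroup (B : Finset G) (hB : 2 * #(B / B) < 3 * #B) : Subgroup G where
  carrier := ↑(B / B)
  mul_mem' := mul_mem_div_self_of_two_mul_card_div_lt hB
  one_mem' := by
    obtain ⟨b, hb⟩ : B.Nonempty := by rw [← card_pos]; omega
    exact mem_div.2 ⟨b, hb, b, hb, div_self' b⟩
  inv_mem' := by
    intro x hx
    obtain ⟨b, hb, c, hc, rfl⟩ := mem_div.1 hx
    exact mem_div.2 ⟨c, hc, b, hb, (inv_div b c).symm⟩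

lemma mem_univ_image_div_univ_image {ι : Type*} [Fintype ι] {f : ι → G} :
    g ∈ univ.image f / univ.image f ↔ ∃ i j, f i / f j = g := by
  simp [mem_div]

lemma card_le_ncard_add_one {α β : Type*} [DecidableEq α] {s : Finset α} {t : Set β}
    {f : α → β} (hf : Function.Injective f) (ht : t.Finite) (a : α)
    (h : ∀ x ∈ s, x ≠ a → f x ∈ t) : #s ≤ t.ncard + 1 := by
  have hsub : f '' ↑(s.erase a) ⊆ t := by
    rintro _ ⟨x, hx, rfl⟩
    obtain ⟨hxa, hxs⟩ := mem_erase.1 hx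
    exact h x hxs hxa
  have := Set.ncard_le_ncard hsub ht
  rw [Set.ncard_image_of_injective _ hf, Set.ncard_coe_finset] at this
  have := pred_card_le_card_erase (s := s) (a := a)
  omega

end Finset

lemma finite_setOf_sum_pow_eq_zero {R : Type*} [CommRing R] [IsDomain R] {A : Finset ℕ}
    (hA : A.Nonempty) : {z : R | ∑ a ∈ A, z ^ a = 0}.Finite := by
  obtain ⟨n, hn⟩ := hA
  have hcoeff : (∑ a ∈ A, X ^ a : R[X]).coeff n = 1 := by
    simp [coeff_X_pow, hn]
  have hp : (∑ a ∈ A, X ^ a : R[X]) ≠ 0 := fun h => by simp [h] at hcoeff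
  refine (finite_setOfPred_isRoot hp).subset fun z hz => ?_
  simpa [eval_finsetSum] using hz

lemma Real.injOn_fourierChar_Ico : Set.InjOn 𝐞 (Set.Ico 0 1) := by
  refine (Circle.exp_injOn_Ico (a := 0) (b := 2 * Real.pi) (by simp)).comp
    (mul_right_injective₀ (by positivity)).injOn fun x ⟨hx0, hx1⟩ => ?_
  constructor <;> nlinarith [Real.pi_pos]

lemma Real.coe_fourierChar_div (x y : ℝ) :
    ((𝐞 x / 𝐞 y : Circle) : ℂ) = Complex.exp (2 * Real.pi * I * (x - y)) := by
  rw [← AddChar.map_sub_eq_div, Real.fourierChar_apply]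
  push_cast
  ring_nf

lemma Real.setOf_exp_sub_eq_image_div {ι : Type*} [Fintype ι] [DecidableEq Circle]
    (θ : ι → ℝ) :
    {z : ℂ | ∃ i j, z = Complex.exp (2 * Real.pi * I * (θ i - θ j))} =
      (↑) '' (↑(univ.image (𝐞 ∘ θ) / univ.image (𝐞 ∘ θ)) : Set Circle) := by
  ext z
  constructor
  · rintro ⟨i, j, rfl⟩
    exact ⟨_, mem_univ_image_div_univ_image.2 ⟨i, j, rfl⟩, Real.coe_fourierChar_div _ _⟩
  · rintro ⟨_, hx, rfl⟩
    obtain ⟨i, j, rfl⟩ := mem_univ_image_div_univ_image.1 hx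
    exact ⟨i, j, Real.coe_fourierChar_div _ _⟩

theorem stmt11_general (A : Finset ℕ) (h0A : 0 ∈ A) (N : ℕ)
    (θ : Fin N → ℝ) (h0 : ∀ h : 0 < N, θ ⟨0, h⟩ = 0)
    (hinj : Function.Injective θ)
    (hIoo : ∀ j h, j ≠ ⟨0, h⟩ → θ j ∈ Set.Ioo (0 : ℝ) 1)
    (hspec : ∀ i j, i ≠ j →
      ∑ a ∈ A, Complex.exp (2 * Real.pi * Complex.I * (θ i - θ j)) ^ a = 0)
    (hroots : 2 * Set.ncard {z : ℂ | ‖z‖ = 1 ∧ ∑ a ∈ A, z ^ a = 0}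
        < 3 * N - 2) :
    (1 : ℂ) ∈ {z : ℂ | ∃ i j, z = Complex.exp (2 * Real.pi * Complex.I * (θ i - θ j))} ∧
    {z : ℂ | ∃ i j, z = Complex.exp (2 * Real.pi * Complex.I * (θ i - θ j))}.Finite ∧
    (∀ z ∈ {z : ℂ | ∃ i j, z = Complex.exp (2 * Real.pi * Complex.I * (θ i - θ j))},
      ∀ w ∈ {z : ℂ | ∃ i j, z = Complex.exp (2 * Real.pi * Complex.I * (θ i - θ j))},
        z * w ∈ {z : ℂ | ∃ i j, z = Complex.exp (2 * Real.pi * Complex.I * (θ i - θ j))}) ∧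
    (∀ z ∈ {z : ℂ | ∃ i j, z = Complex.exp (2 * Real.pi * Complex.I * (θ i - θ j))},
      ∃ w ∈ {z : ℂ | ∃ i j, z = Complex.exp (2 * Real.pi * Complex.I * (θ i - θ j))},
        z * w = 1) := by
  classical
  set B : Finset Circle := univ.image (𝐞 ∘ θ)
  have hθ : ∀ i, θ i ∈ Set.Ico (0 : ℝ) 1 := fun i => by
    by_cases hi : i = ⟨0, i.pos⟩
    · rw [hi, h0]; exact ⟨le_rfl, one_pos⟩
    · exact Set.Ioo_subset_Ico_self (hIoo i i.pos hi)
  have hBcard : #B = N := by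
    rw [card_image_of_injective _ ((Real.injOn_fourierChar_Ico.injective_iff _
      (Set.range_subset_iff.2 hθ)).2 hinj), card_univ, Fintype.card_fin]
  have hroot : ∀ z ∈ B / B, z ≠ 1 →
      (z : ℂ) ∈ {z : ℂ | ‖z‖ = 1 ∧ ∑ a ∈ A, z ^ a = 0} := by
    intro z hz hz1
    obtain ⟨i, j, rfl⟩ := mem_univ_image_div_univ_image.1 hz
    refine ⟨Circle.norm_coe _, ?_⟩
    rw [Function.comp_apply, Function.comp_apply, Real.coe_fourierChar_div]
    exact hspec i j fun hij => hz1 (by rw [hij, div_self'])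
  have hdiv : 2 * #(B / B) < 3 * #B := by
    have := card_le_ncard_add_one (s := B / B) Circle.coe_injective
      ((finite_setOf_sum_pow_eq_zero ⟨0, h0A⟩).subset fun _ hz => hz.2) 1 hroot
    omega
  rw [Real.setOf_exp_sub_eq_image_div]
  set H := divSubgroup B hdiv
  refine ⟨⟨1, H.one_mem, rfl⟩, (B / B).finite_toSet.image _, ?_, ?_⟩
  · rintro _ ⟨x, hx, rfl⟩ _ ⟨y, hy, rfl⟩
    exact ⟨x * y, H.mul_mem hx hy, rfl⟩
  · rintro _ ⟨x, hx, rfl⟩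
    exact ⟨_, ⟨x⁻¹, H.inv_mem hx, rfl⟩, by simp⟩

theorem stmt11 (A : Finset ℕ) (h0A : 0 ∈ A) (N : ℕ) (hN : N = A.card) (hN2 : 2 ≤ N)
    (θ : Fin N → ℝ) (h0 : ∀ h : 0 < N, θ ⟨0, h⟩ = 0)
    (hinj : Function.Injective θ)
    (hIoo : ∀ j h, j ≠ ⟨0, h⟩ → θ j ∈ Set.Ioo (0 : ℝ) 1)
    (hspec : ∀ i j, i ≠ j →
      ∑ a ∈ A, Complex.exp (2 * Real.pi * Complex.I * (θ i - θ j)) ^ a = 0)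
    (hroots : 2 * Set.ncard {z : ℂ | ‖z‖ = 1 ∧ ∑ a ∈ A, z ^ a = 0}
        < 3 * N - 2) :
    (1 : ℂ) ∈ {z : ℂ | ∃ i j, z = Complex.exp (2 * Real.pi * Complex.I * (θ i - θ j))} ∧
    {z : ℂ | ∃ i j, z = Complex.exp (2 * Real.pi * Complex.I * (θ i - θ j))}.Finite ∧
    (∀ z ∈ {z : ℂ | ∃ i j, z = Complex.exp (2 * Real.pi * Complex.I * (θ i - θ j))},
      ∀ w ∈ {z : ℂ | ∃ i j, z = Complex.exp (2 * Real.pi * Complex.I * (θ i - θ j))},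
        z * w ∈ {z : ℂ | ∃ i j, z = Complex.exp (2 * Real.pi * Complex.I * (θ i - θ j))}) ∧
    (∀ z ∈ {z : ℂ | ∃ i j, z = Complex.exp (2 * Real.pi * Complex.I * (θ i - θ j))},
      ∃ w ∈ {z : ℂ | ∃ i j, z = Complex.exp (2 * Real.pi * Complex.I * (θ i - θ j))},
        z * w = 1) :=
  stmt11_general A h0A N θ h0 hinj hIoo hspec hroots
end

section
/- Let A ⊂ ℤ≥0 finite with 0 ∈ A, N = #A ≥ 2, A(x) = Σ_{a∈A} x^a. Suppose A(x) has a spectrum θ₁,...,θ_{N-1} with θ₁ irrational. Then A(x) has at least N − 1 roots of modulus different from 1 (counted as distinct complex numbers). -/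
/-!
Write `zⱼ = e^{2πiθⱼ}`, so `z₀ = 1` and every ratio `zⱼ / zₖ` (`j ≠ k`) is a root of the monic
integer polynomial `A(x)`. Hence the `zⱼ` are algebraic integers generating a number field `K`.
Since `θ₁` is irrational, `z₁` is not a root of unity, so by Kronecker's theorem some embedding
`φ : K → ℂ` has `|φ z₁| ≠ 1`. The points `uⱼ = φ zⱼ` are distinct, their ratios are still roots of
`A(x)`, and their moduli are not all equal (`|u₀| = 1`). Dividing each `uⱼ` of maximal modulus by
one of minimal modulus, and every other `uⱼ` by one of maximal modulus, gives `N` distinct roots of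
`A(x)`, of modulus `> 1` and `< 1` respectively.
-/

open Complex Polynomial Function
open scoped Real

lemma monic_sum_X_pow {R : Type*} [Semiring R] {A : Finset ℕ} (hA : A.Nonempty) :
    (∑ a ∈ A, (X : R[X]) ^ a).Monic := by
  rw [← Finset.add_sum_erase A _ (A.max'_mem hA)]
  refine monic_X_pow_add ((degree_sum_le _ _).trans_lt ?_)
  refine (Finset.sup_lt_iff (WithBot.bot_lt_coe _)).2 fun a ha => (degree_X_pow_le a).trans_lt ?_
  exact_mod_cast (A.le_max' a (Finset.mem_of_mem_erase ha)).lt_of_ne (Finset.ne_of_mem_erase ha)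

lemma exp_two_pi_I_mul_injOn_Ico :
    Set.InjOn (fun θ : ℝ => exp (2 * π * I * θ)) (Set.Ico 0 1) := by
  intro x hx y hy hxy
  have h2π : (0 : ℝ) < 2 * π := by positivity
  have hmem : ∀ {t : ℝ}, t ∈ Set.Ico (0 : ℝ) 1 → 2 * π * t ∈ Set.Ico 0 (2 * π) := fun ht =>
    ⟨by nlinarith [ht.1], by nlinarith [ht.2]⟩
  have := Circle.exp_injOn_Ico (by simp) (hmem hx) (hmem hy)
    (Circle.ext <| by simpa [Circle.coe_exp, mul_comm, mul_left_comm] using hxy)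
  exact mul_left_cancel₀ h2π.ne' this

lemma exp_two_pi_I_mul_pow_ne_one {θ : ℝ} (hθ : Irrational θ) {n : ℕ} (hn : 0 < n) :
    exp (2 * π * I * θ) ^ n ≠ 1 := by
  rw [← exp_nat_mul, Ne, exp_eq_one_iff]
  rintro ⟨m, hm⟩
  have : (θ * n : ℂ) = m := mul_left_cancel₀ two_pi_I_ne_zero (by linear_combination hm)
  exact (hθ.mul_natCast hn.ne').ne_int m (by exact_mod_cast this)

theorem NumberField.exists_embedding_norm_ne_one {K : Type*} [Field K] [NumberField K] {x : K}
    (hx : IsIntegral ℤ x) (hroot : ∀ n, 0 < n → x ^ n ≠ 1) : ∃ φ : K →+* ℂ, ‖φ x‖ ≠ 1 := by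
  by_contra! h
  obtain ⟨n, hn, hxn⟩ := Embeddings.pow_eq_one_of_norm_eq_one K ℂ hx h
  exact hroot n hn hxn

lemma numberField_adjoin_range {L : Type*} [Field L] [CharZero L] {ι : Type*} [Finite ι]
    {z : ι → L} (hz : ∀ j, IsIntegral ℤ (z j)) :
    NumberField (IntermediateField.adjoin ℚ (Set.range z)) where
  to_finiteDimensional := IntermediateField.finiteDimensional_adjoin <| by
    rintro _ ⟨j, rfl⟩
    exact (hz j).tower_top

lemma exists_injective_ratio_norm_ne_one {𝕜 : Type*} [NormedDivisionRing 𝕜] {ι : Type*}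
    [Finite ι] {u : ι → 𝕜} (hu : Injective u) (hu0 : ∀ j, u j ≠ 0)
    (hnorm : ∃ i j, ‖u i‖ ≠ ‖u j‖) :
    ∃ w : ι → 𝕜, Injective w ∧ ∀ j, ‖w j‖ ≠ 1 ∧ ∃ k, k ≠ j ∧ w j = u j / u k := by
  have : Nonempty ι := hnorm.nonempty
  obtain ⟨k, hk⟩ := Finite.exists_max fun j => ‖u j‖
  obtain ⟨t, ht⟩ := Finite.exists_min fun j => ‖u j‖
  have hut : 0 < ‖u t‖ := norm_pos_iff.2 (hu0 t)
  have htk : ‖u t‖ < ‖u k‖ := by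
    obtain ⟨i, j, hij⟩ := hnorm
    by_contra! h
    exact hij (le_antisymm (by linarith [hk i, ht j]) (by linarith [hk j, ht i]))
  classical
  let w j := if ‖u j‖ = ‖u k‖ then u j / u t else u j / u k
  have hw_max : ∀ j, ‖u j‖ = ‖u k‖ → 1 < ‖w j‖ := fun j hj => by
    simpa only [w, if_pos hj, norm_div, hj, one_lt_div hut] using htk
  have hw_lt_max : ∀ j, ‖u j‖ ≠ ‖u k‖ → ‖w j‖ < 1 := fun j hj => by
    simpa only [w, if_neg hj, norm_div, div_lt_one (hut.trans htk)] using (hk j).lt_of_ne hj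
  refine ⟨w, fun i j hij => ?_, fun j => ?_⟩
  · by_cases hi : ‖u i‖ = ‖u k‖ <;> by_cases hj : ‖u j‖ = ‖u k‖
    · simp only [w, if_pos hi, if_pos hj] at hij
      exact hu ((div_left_inj' (hu0 t)).1 hij)
    · linarith [hw_max i hi, hw_lt_max j hj, congrArg norm hij]
    · linarith [hw_max j hj, hw_lt_max i hi, congrArg norm hij]
    · simp only [w, if_neg hi, if_neg hj] at hij
      exact hu ((div_left_inj' (hu0 k)).1 hij)
  · by_cases hj : ‖u j‖ = ‖u k‖
    · exact ⟨(hw_max j hj).ne', t, by rintro rfl; exact htk.ne hj, if_pos hj⟩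
    · exact ⟨(hw_lt_max j hj).ne, k, by rintro rfl; exact hj rfl, if_neg hj⟩

theorem exists_card_le_roots_norm_ne_one {ι : Type*} [Fintype ι] {P : ℤ[X]} (hP : P.Monic)
    {z : ι → ℂ} (hz : Injective z) (hz0 : ∀ j, z j ≠ 0) {i₀ i : ι} (hi₀ : z i₀ = 1)
    (hi : ∀ n, 0 < n → z i ^ n ≠ 1) (hroots : ∀ j k, j ≠ k → aeval (z j / z k) P = 0) :
    ∃ S : Finset ℂ, Fintype.card ι ≤ S.card ∧ ∀ x ∈ S, aeval x P = 0 ∧ ‖x‖ ≠ 1 := by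
  have hint : ∀ j, IsIntegral ℤ (z j) := fun j => by
    by_cases hj : j = i₀
    · exact hj ▸ hi₀ ▸ isIntegral_one
    · exact ⟨P, hP, (by simpa [hi₀] using hroots j i₀ hj : aeval (z j) P = 0)⟩
  let K := IntermediateField.adjoin ℚ (Set.range z)
  have : NumberField K := numberField_adjoin_range hint
  let zK : ι → K := fun j => ⟨z j, IntermediateField.subset_adjoin _ _ ⟨j, rfl⟩⟩
  have hzK₀ : zK i₀ = 1 := Subtype.ext hi₀
  have hrootsK : ∀ j k, j ≠ k → aeval (zK j / zK k) P = 0 := fun j k hjk => by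
    apply (algebraMap K ℂ).injective
    rw [← aeval_algebraMap_apply, map_div₀, map_zero]
    exact hroots j k hjk
  obtain ⟨φ, hφ⟩ : ∃ φ : K →+* ℂ, ‖φ (zK i)‖ ≠ 1 := by
    refine NumberField.exists_embedding_norm_ne_one ?_ fun n hn h => hi n hn ?_
    · have hii₀ : i ≠ i₀ := by rintro rfl; exact hi 1 one_pos (by simpa using hi₀)
      exact ⟨P, hP, (by simpa [hzK₀] using hrootsK i i₀ hii₀ : aeval (zK i) P = 0)⟩
    · simpa using congrArg (algebraMap K ℂ) h
  let u : ι → ℂ := fun j => φ (zK j)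
  obtain ⟨w, hw, hwu⟩ := exists_injective_ratio_norm_ne_one (u := u)
    (φ.injective.comp fun j k h => hz (congrArg Subtype.val h))
    (fun j => (map_ne_zero φ).2 fun h => hz0 j (congrArg Subtype.val h))
    ⟨i, i₀, by simpa [u, hzK₀] using hφ⟩
  refine ⟨Finset.univ.image w, by rw [Finset.card_image_of_injective _ hw, Finset.card_univ], ?_⟩
  intro x hx
  obtain ⟨j, -, rfl⟩ := Finset.mem_image.1 hx
  obtain ⟨hj1, k, hkj, hwj⟩ := hwu j
  refine ⟨?_, hj1⟩
  rw [hwj, ← map_div₀]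
  change aeval (φ.toIntAlgHom _) P = 0
  rw [aeval_algHom_apply, hrootsK j k hkj.symm, map_zero]

theorem stmt13_general (A : Finset ℕ) (h0A : 0 ∈ A) (N : ℕ) (hN2 : 2 ≤ N)
    (θ : Fin N → ℝ) (h0 : ∀ h : 0 < N, θ ⟨0, h⟩ = 0)
    (hinj : Function.Injective θ)
    (hIoo : ∀ j h, j ≠ ⟨0, h⟩ → θ j ∈ Set.Ioo (0 : ℝ) 1)
    (hspec : ∀ i j, i ≠ j →
      ∑ a ∈ A, Complex.exp (2 * Real.pi * Complex.I * (θ i - θ j)) ^ a = 0)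
    (hirr : Irrational (θ ⟨1, lt_of_lt_of_le one_lt_two hN2⟩)) :
    ∃ S : Finset ℂ, N - 1 ≤ S.card ∧
      ∀ z ∈ S, (∑ a ∈ A, z ^ a = 0) ∧ ‖z‖ ≠ 1 := by
  have hNpos : 0 < N := by omega
  have hθ : ∀ j, θ j ∈ Set.Ico 0 1 := fun j => by
    by_cases hj : j = ⟨0, hNpos⟩
    · simp [hj, h0 hNpos]
    · exact Set.Ioo_subset_Ico_self (hIoo j hNpos hj)
  let z : Fin N → ℂ := fun j => exp (2 * π * I * θ j)
  obtain ⟨S, hcard, hS⟩ := exists_card_le_roots_norm_ne_one (monic_sum_X_pow ⟨0, h0A⟩) (z := z)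
    (i₀ := ⟨0, hNpos⟩) (fun j k h => hinj (exp_two_pi_I_mul_injOn_Ico (hθ j) (hθ k) h))
    (fun j => exp_ne_zero _) (by simp [z, h0 hNpos]) (fun _ => exp_two_pi_I_mul_pow_ne_one hirr)
    (fun j k hjk => by simpa [z, ← exp_sub, mul_sub] using hspec j k hjk)
  refine ⟨S, (Nat.sub_le N 1).trans (by simpa using hcard), fun x hx => ?_⟩
  simpa using hS x hx

theorem stmt13 (A : Finset ℕ) (h0A : 0 ∈ A) (N : ℕ) (hN : N = A.card) (hN2 : 2 ≤ N)
    (θ : Fin N → ℝ) (h0 : ∀ h : 0 < N, θ ⟨0, h⟩ = 0)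
    (hinj : Function.Injective θ)
    (hIoo : ∀ j h, j ≠ ⟨0, h⟩ → θ j ∈ Set.Ioo (0 : ℝ) 1)
    (hspec : ∀ i j, i ≠ j →
      ∑ a ∈ A, Complex.exp (2 * Real.pi * Complex.I * (θ i - θ j)) ^ a = 0)
    (hirr : Irrational (θ ⟨1, lt_of_lt_of_le one_lt_two hN2⟩)) :
    ∃ S : Finset ℂ, N - 1 ≤ S.card ∧
      ∀ z ∈ S, (∑ a ∈ A, z ^ a = 0) ∧ ‖z‖ ≠ 1 :=
  stmt13_general A h0A N hN2 θ h0 hinj hIoo hspec hirr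
end

section
/- Let A = {0, a₁, a₂} ⊂ ℤ≥0 with gcd(a₁, a₂) = 1, and suppose the polynomial A(x) = 1 + x^{a₁} + x^{a₂} has a spectrum {θ₁, θ₂}. Then θ₁, θ₂ ∈ (1/3)ℤ, i.e., {θ₁, θ₂} = {1/3, 2/3}. -/
open Complex
open scoped Real ComplexConjugate

/-!
Write `z = e^{2πiθ}`. The spectral condition for the pair `(θ, 0)` says `1 + z^{a₁} + z^{a₂} = 0`
with both powers on the unit circle, which forces `z^{a₁}` and `z^{a₂}` to be cube roots of unity.
As `gcd(a₁, a₂) = 1`, a Bézout combination gives `z³ = 1`, i.e. `θ ∈ (1/3)ℤ`.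
-/

theorem pow_three_eq_one_of_one_add_add_eq_zero {u v : ℂ} (hu : ‖u‖ = 1) (hv : ‖v‖ = 1)
    (h : 1 + u + v = 0) : v ^ 3 = 1 := by
  have hvv : v * conj v = 1 := by rw [mul_conj', hv]; norm_num
  have huu : u * conj u = 1 := by rw [mul_conj', hu]; norm_num
  obtain rfl : u = -1 - v := by linear_combination h
  -- `‖1 + v‖ = ‖v‖ = 1` pins `Re v = -1/2`; then `v (v + v̄) - v v̄ = v² + v + 1 = 0`.
  have hre : v + conj v = -1 := by
    simp only [map_sub, map_neg, map_one] at huu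
    linear_combination huu - hvv
  linear_combination (v - 1) * (v * hre - hvv)

theorem exists_int_eq_div_three_of_exp_pow_three_eq_one {t : ℝ}
    (h : exp (2 * π * I * t) ^ 3 = 1) : ∃ k : ℤ, t = k / 3 := by
  rw [← exp_nat_mul, exp_eq_one_iff] at h
  obtain ⟨k, hk⟩ := h
  refine ⟨k, ?_⟩
  have h2πI : 2 * π * I ≠ 0 := by simp [Real.pi_ne_zero, I_ne_zero]
  have h3t : ((3 * t : ℝ) : ℂ) = k := by
    apply mul_right_cancel₀ h2πI
    push_cast
    linear_combination hk
  rw [eq_div_iff three_ne_zero, mul_comm]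
  exact_mod_cast h3t

theorem exists_int_eq_div_three_of_one_add_pow_add_pow_eq_zero {a₁ a₂ : ℕ}
    (hcop : Nat.gcd a₁ a₂ = 1) {t : ℝ}
    (h : 1 + exp (2 * π * I * t) ^ a₁ + exp (2 * π * I * t) ^ a₂ = 0) :
    ∃ k : ℤ, t = k / 3 := by
  set z := exp (2 * π * I * t) with hz
  have hz1 : ‖z‖ = 1 := by
    rw [hz, show 2 * π * I * t = ((2 * π * t : ℝ) : ℂ) * I by push_cast; ring]
    exact norm_exp_ofReal_mul_I _
  have hzn (n : ℕ) : ‖z ^ n‖ = 1 := by rw [norm_pow, hz1, one_pow]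
  have h₁ : (z ^ a₁) ^ 3 = 1 :=
    pow_three_eq_one_of_one_add_add_eq_zero (hzn a₂) (hzn a₁) (by linear_combination h)
  have h₂ : (z ^ a₂) ^ 3 = 1 := pow_three_eq_one_of_one_add_add_eq_zero (hzn a₁) (hzn a₂) h
  apply exists_int_eq_div_three_of_exp_pow_three_eq_one
  rw [← pow_eq_one_iff_of_coprime hcop, ← pow_mul, ← pow_mul, mul_comm 3, mul_comm 3, pow_mul,
    pow_mul]
  exact ⟨h₁, h₂⟩

theorem stmt17_general (a₁ a₂ : ℕ)
    (hcop : Nat.gcd a₁ a₂ = 1)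
    (θ : Fin 3 → ℝ) (h0 : θ 0 = 0)
    (hspec : ∀ i j, i ≠ j →
      1 + Complex.exp (2 * Real.pi * Complex.I * (θ i - θ j)) ^ a₁
        + Complex.exp (2 * Real.pi * Complex.I * (θ i - θ j)) ^ a₂ = 0) :
    (∃ k : ℤ, θ 1 = (k : ℝ) / 3) ∧ (∃ l : ℤ, θ 2 = (l : ℝ) / 3) := by
  have hθ : ∀ j, j ≠ 0 → ∃ k : ℤ, θ j = k / 3 := fun j hj => by
    have h := hspec j 0 hj
    rw [h0, ofReal_zero, sub_zero] at h
    exact exists_int_eq_div_three_of_one_add_pow_add_pow_eq_zero hcop h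
  exact ⟨hθ 1 (by decide), hθ 2 (by decide)⟩

theorem stmt17 (a₁ a₂ : ℕ) (h1 : 0 < a₁) (h12 : a₁ < a₂)
    (hcop : Nat.gcd a₁ a₂ = 1)
    (θ : Fin 3 → ℝ) (h0 : θ 0 = 0)
    (hinj : Function.Injective θ)
    (hIoo : ∀ j, j ≠ 0 → θ j ∈ Set.Ioo (0 : ℝ) 1)
    (hspec : ∀ i j, i ≠ j →
      1 + Complex.exp (2 * Real.pi * Complex.I * (θ i - θ j)) ^ a₁
        + Complex.exp (2 * Real.pi * Complex.I * (θ i - θ j)) ^ a₂ = 0) :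
    (∃ k : ℤ, θ 1 = (k : ℝ) / 3) ∧ (∃ l : ℤ, θ 2 = (l : ℝ) / 3) :=
  stmt17_general a₁ a₂ hcop θ h0 hspec
end
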